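/- arXiv:2207.08300 — 3 statements merged into one kernel-verified Lean document; each statement's English description precedes it below -/
import Mathlib

section
/- The shuffle product distributes over the composition product from the left: for series c, d ∈ ℝ⟨⟨X'⟩⟩ and e ∈ ℝ^ℓ⟨⟨X⟩⟩ with |X'| = ℓ+1, one has (c ⧢ d) ∘ e = (c ∘ e) ⧢ (d ∘ e). In other words, for fixed e, the map c ↦ c ∘ e is a homomorphism of shuffle algebras. -/
open scoped BigOperators

namespace FPS

/-- A (noncommutative) formal power series over alphabet `X` is a map from words to `ℝ`. -/
abbrev Series (X : Type*) := List X → ℝ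

noncomputable section

variable {X : Type*} [DecidableEq X]

/-- The series `1·∅`. -/
def one : Series X := fun η => if η = [] then 1 else 0

/-- Cauchy (concatenation) product. -/
def cauchy (c d : Series X) : Series X := fun η =>
  ∑ i ∈ Finset.range (η.length + 1), c (η.take i) * d (η.drop i)

/-- Shuffle product. -/
def sh (c d : Series X) : List X → ℝ
  | [] => c [] * d []
  | x :: t => sh (fun w => c (x :: w)) d t + sh c (fun w => d (x :: w)) t

/-- Cauchy powers. -/
def cpow (c : Series X) : ℕ → Series X
  | 0 => one
  | k + 1 => cauchy c (cpow c k)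

/-- Shuffle powers. -/
def shpow (c : Series X) : ℕ → Series X
  | 0 => one
  | k + 1 => sh c (shpow c k)

/-- The proper series `1 - s/(s,∅)` entering the inverse formulas (negated proper part of `s/(s,∅)`). -/
def sprime (s : Series X) : Series X := fun w => if w = [] then 0 else - (s w / s [])

/-- Cauchy inverse `(s,∅)⁻¹ Σ_k (s')^k` of a purely improper series. -/
def cInv (s : Series X) : Series X := fun η =>
  (s [])⁻¹ * ∑ k ∈ Finset.range (η.length + 1), cpow (sprime s) k η

/-- Shuffle inverse `(s,∅)⁻¹ Σ_k (s')^{⧢k}` of a purely improper series. -/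
def shInv (s : Series X) : Series X := fun η =>
  (s [])⁻¹ * ∑ k ∈ Finset.range (η.length + 1), shpow (sprime s) k η

/-- The order: minimal length of a word in the support (`⊤` for the zero series). -/
def ord (c : Series X) : ℕ∞ := sInf ((fun η : List X => (η.length : ℕ∞)) '' {η | c η ≠ 0})

/-- `σ^n` with `σ^⊤ = 0`. -/
def powE (σ : ℝ) : ℕ∞ → ℝ := fun n => if n = ⊤ then 0 else σ ^ n.toNat

/-- The ultrametric `κ(c,d) = σ^{ord(c-d)}`. -/
def kappa (σ : ℝ) (c d : Series X) : ℝ := powE σ (ord (c - d))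

/-- Order of a vector of series (minimum over components). -/
def ordV {n : ℕ} (c : Fin n → Series X) : ℕ∞ := ⨅ i, ord (c i)

/-- Ultrametric on vectors of series. -/
def kappaV (σ : ℝ) {n : ℕ} (c d : Fin n → Series X) : ℝ := powE σ (ordV (c - d))

/-- Proper part `c - (c,∅)∅`. -/
def properPart (c : Series X) : Series X := fun w => if w = [] then 0 else c w

/-- Left concatenation by a letter: `x·s`. -/
def leftc (x : X) (s : Series X) : Series X := fun η =>
  match η with
  | [] => 0
  | y :: t => if y = x then s t else 0

end

noncomputable section

/-- `φ̄_d(η)` : the algebra homomorphism defining the multiplicative mixed composition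
product, with `φ̄_d(x_0)(w) = x_0 w` and `φ̄_d(x_i)(w) = x_i (d_i ⧢ w)`. -/
def phiWord {m : ℕ} (d : Fin m → Series (Fin (m + 1))) :
    List (Fin (m + 1)) → Series (Fin (m + 1)) → Series (Fin (m + 1))
  | [], w => w
  | i :: t, w =>
      Fin.cases (leftc 0 (phiWord d t w)) (fun j => leftc j.succ (sh (d j) (phiWord d t w))) i

/-- Multiplicative mixed composition product `c ∘̄ δ_d = Σ_η (c,η) φ̄_d(η)(1)`. -/
def mix {m : ℕ} (c : Series (Fin (m + 1))) (d : Fin m → Series (Fin (m + 1))) :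
    Series (Fin (m + 1)) := fun η =>
  ∑ k ∈ Finset.range (η.length + 1),
    ∑ v : List.Vector (Fin (m + 1)) k, c v.toList * phiWord d v.toList one η

/-- `ψ_e(η)` : the algebra homomorphism defining the composition product, with
`ψ_e(x'_i)(w) = x_0 (e_i ⧢ w)`, `e_0 = 1∅`. -/
def psiWord {ℓ m : ℕ} (e : Fin ℓ → Series (Fin (m + 1))) :
    List (Fin (ℓ + 1)) → Series (Fin (m + 1)) → Series (Fin (m + 1))
  | [], w => w
  | i :: t, w => leftc 0 (sh (Fin.cases one e i) (psiWord e t w))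

/-- Composition product `c ∘ e = Σ_η (c,η) ψ_e(η)(1)`. -/
def comp {ℓ m : ℕ} (c : Series (Fin (ℓ + 1))) (e : Fin ℓ → Series (Fin (m + 1))) :
    Series (Fin (m + 1)) := fun η =>
  ∑ k ∈ Finset.range (η.length + 1),
    ∑ v : List.Vector (Fin (ℓ + 1)) k, c v.toList * psiWord e v.toList one η

/-- The multiplicative composition product on `δ`-series:
`δ_c ∘ δ_d = δ_{d ⧢ (c ∘̄ δ_d)}`, expressed on the underlying series. -/
def star {m : ℕ} (c d : Fin m → Series (Fin (m + 1))) : Fin m → Series (Fin (m + 1)) :=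
  fun i => sh (d i) (mix (c i) d)

/-- The all-ones series vector (generating series of the identity `δ_1`). -/
def oneV {X : Type*} [DecidableEq X] (m : ℕ) : Fin m → Series X := fun _ => one

open Classical in
/-- The inverse `d^{∘-1}` in the multiplicative dynamic output feedback group: the unique
solution of `e = d^{⧢-1} ∘̄ δ_e`. -/
def dynInv {m : ℕ} (d : Fin m → Series (Fin (m + 1))) : Fin m → Series (Fin (m + 1)) :=
  if h : ∃ e : Fin m → Series (Fin (m + 1)), e = fun i => mix (shInv (d i)) e then h.choose
  else oneV m

/-- Shuffle power of a family: `c^{⧢n} = c_1^{⧢n_1} ⧢ ⋯ ⧢ c_ℓ^{⧢n_ℓ}`. -/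
def shFam {X : Type*} [DecidableEq X] {ℓ : ℕ} (c : Fin ℓ → Series X) (n : Fin ℓ →₀ ℕ) :
    Series X :=
  (List.finRange ℓ).foldr (fun i acc => sh (shpow (c i) (n i)) acc) one

/-- Wiener-Fliess composition product `d ∘̂ c = Σ_{η∈X̃*} (d,η) c^{⧢η}` of a commutative
series `d` with a (proper) noncommutative series vector `c`. -/
def wf {X : Type*} [DecidableEq X] {ℓ : ℕ} (d : MvPowerSeries (Fin ℓ) ℝ)
    (c : Fin ℓ → Series X) : Series X := fun η =>
  ∑ n ∈ Finset.Iic (Finsupp.equivFunOnFinite.symm fun _ : Fin ℓ => η.length),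
    MvPowerSeries.coeff n d * shFam c n η

end

/-! The composition product is characterised by `(c ∘ e)(∅) = (c, ∅)`, by
`(c ∘ e)(x₀ η) = Σᵢ (eᵢ ⧢ (x'ᵢ⁻¹ c) ∘ e)(η)` and by vanishing on words that start with another
letter. Since each left shift `x'ᵢ⁻¹` is a derivation of `⧢`, both sides of the identity satisfy
the same recursion, and induction on the length of the word closes the argument using that `⧢`
is bilinear, commutative and associative. -/

section Shuffle

variable {X : Type*}

theorem sh_cons (c d : Series X) (x : X) :
    (fun t => sh c d (x :: t)) = sh (fun w => c (x :: w)) d + sh c (fun w => d (x :: w)) :=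
  rfl

theorem sh_comm (a b : Series X) : sh a b = sh b a := by
  funext t
  induction t generalizing a b with
  | nil => exact mul_comm _ _
  | cons x t ih => simp only [sh, ih a, ih _ b, add_comm]

theorem sh_add_right (a b b' : Series X) : sh a (b + b') = sh a b + sh a b' := by
  funext t
  induction t generalizing a b b' with
  | nil => exact mul_add _ _ _
  | cons x t ih =>
    simp only [sh, Pi.add_def] at ih ⊢
    rw [ih, ih]
    ring

theorem sh_smul_right (a b : Series X) (r : ℝ) : sh a (r • b) = r • sh a b := by
  funext t
  induction t generalizing a b with
  | nil => exact mul_left_comm _ _ _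
  | cons x t ih =>
    simp only [sh, Pi.smul_def, smul_eq_mul] at ih ⊢
    rw [ih, ih]
    ring

theorem sh_add_left (a a' b : Series X) : sh (a + a') b = sh a b + sh a' b := by
  rw [sh_comm, sh_add_right, sh_comm b, sh_comm b]

theorem sh_zero_right (a : Series X) : sh a 0 = 0 :=
  map_zero (AddMonoidHom.mk' (sh a) (sh_add_right a))

theorem sh_zero_left (b : Series X) : sh 0 b = 0 := by
  rw [sh_comm, sh_zero_right]

theorem sh_sum_right {ι : Type*} (s : Finset ι) (a : Series X) (g : ι → Series X) :
    sh a (∑ i ∈ s, g i) = ∑ i ∈ s, sh a (g i) :=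
  map_sum (AddMonoidHom.mk' (sh a) (sh_add_right a)) g s

theorem sh_sum_left {ι : Type*} (s : Finset ι) (g : ι → Series X) (b : Series X) :
    sh (∑ i ∈ s, g i) b = ∑ i ∈ s, sh (g i) b := by
  simp only [sh_comm _ b, sh_sum_right]

theorem sh_assoc (a b c : Series X) : sh (sh a b) c = sh a (sh b c) := by
  funext t
  induction t generalizing a b c with
  | nil => exact mul_assoc _ _ _
  | cons x t ih =>
    simp only [sh, ← Pi.add_def, sh_add_left, sh_add_right, Pi.add_apply, ih]
    ring

theorem sh_left_comm (a b c : Series X) : sh a (sh b c) = sh b (sh a c) := by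
  rw [← sh_assoc, sh_comm a, sh_assoc]

theorem sh_congr_right {a b b' : Series X} {t : List X}
    (h : ∀ w : List X, w.length ≤ t.length → b w = b' w) : sh a b t = sh a b' t := by
  induction t generalizing a b b' with
  | nil => simp only [sh, h [] le_rfl]
  | cons x t ih =>
    simp only [sh]
    rw [ih fun w hw => h w (by simp; omega), ih fun w hw => h (x :: w) (by simp; omega)]

end Shuffle

theorem sum_vector_succ {α M : Type*} [Fintype α] [AddCommMonoid M] (k : ℕ) (F : List α → M) :
    ∑ v : List.Vector α (k + 1), F v.toList = ∑ i : α, ∑ u : List.Vector α k, F (i :: u.toList) := by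
  let consEquiv : α × List.Vector α k ≃ List.Vector α (k + 1) :=
    ⟨fun p => p.1 ::ᵥ p.2, fun v => (v.head, v.tail), fun _ => by simp, fun _ => by simp⟩
  rw [← consEquiv.sum_comp, Fintype.sum_prod_type]
  simp [consEquiv]

section Composition

variable {ℓ m : ℕ} (e : Fin ℓ → Series (Fin (m + 1)))

theorem psiWord_apply_eq_zero_of_length_lt (w : Series (Fin (m + 1))) {u : List (Fin (ℓ + 1))}
    {η : List (Fin (m + 1))} (h : η.length < u.length) : psiWord e u w η = 0 := by
  induction u generalizing η with
  | nil => simp at h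
  | cons i u ih =>
    cases η with
    | nil => rfl
    | cons y t =>
      simp only [psiWord, leftc]
      split_ifs
      · rw [sh_congr_right (b' := 0) fun w hw => ih (by simp at h; omega), sh_zero_right,
          Pi.zero_apply]
      · rfl

theorem psiWord_cons_apply_cons_zero (i : Fin (ℓ + 1)) (u : List (Fin (ℓ + 1)))
    (w : Series (Fin (m + 1))) (t : List (Fin (m + 1))) :
    psiWord e (i :: u) w (0 :: t) = sh (Fin.cases one e i) (psiWord e u w) t := by
  simp [psiWord, leftc]

theorem psiWord_one_apply_cons_of_ne_zero (u : List (Fin (ℓ + 1))) {x : Fin (m + 1)}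
    (hx : x ≠ 0) (t : List (Fin (m + 1))) : psiWord e u one (x :: t) = 0 := by
  cases u <;> simp [psiWord, leftc, one, hx]

theorem comp_nil (c : Series (Fin (ℓ + 1))) : comp c e [] = c [] := by
  simp [comp, Subsingleton.elim _ List.Vector.nil, psiWord, one]

theorem comp_add (c₁ c₂ : Series (Fin (ℓ + 1))) : comp (c₁ + c₂) e = comp c₁ e + comp c₂ e := by
  funext η
  simp [comp, add_mul, Finset.sum_add_distrib]

theorem comp_apply_eq_sum_range (c : Series (Fin (ℓ + 1))) {η : List (Fin (m + 1))} {N : ℕ}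
    (hN : η.length ≤ N) :
    comp c e η = (∑ k ∈ Finset.range (N + 1), ∑ v : List.Vector (Fin (ℓ + 1)) k,
      c v.toList • psiWord e v.toList one) η := by
  simp only [comp, Finset.sum_apply, Pi.smul_apply, smul_eq_mul]
  refine Finset.sum_subset (Finset.range_subset_range.mpr (by omega)) fun k _ hk => ?_
  refine Finset.sum_eq_zero fun v _ => ?_
  rw [psiWord_apply_eq_zero_of_length_lt e one (by rw [v.toList_length]; simp at hk; omega),
    mul_zero]

theorem comp_apply_cons_zero (c : Series (Fin (ℓ + 1))) (t : List (Fin (m + 1))) :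
    comp c e (0 :: t) = ∑ i, sh (Fin.cases one e i) (comp (fun w => c (i :: w)) e) t := by
  have hshift : ∀ i, sh (Fin.cases one e i) (comp (fun w => c (i :: w)) e) t =
      ∑ k ∈ Finset.range (t.length + 1), ∑ u : List.Vector (Fin (ℓ + 1)) k,
        c (i :: u.toList) * sh (Fin.cases one e i) (psiWord e u.toList one) t := by
    intro i
    rw [sh_congr_right fun w hw => comp_apply_eq_sum_range e _ hw, sh_sum_right]
    simp only [sh_sum_right, sh_smul_right, Finset.sum_apply, Pi.smul_apply, smul_eq_mul]
  have hempty : ∑ v : List.Vector (Fin (ℓ + 1)) 0, c v.toList * psiWord e v.toList one (0 :: t)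
      = 0 := by
    simp [Subsingleton.elim _ List.Vector.nil, psiWord, one]
  rw [Finset.sum_congr rfl fun i _ => hshift i, Finset.sum_comm]
  simp only [comp, List.length_cons, Finset.sum_range_succ' _ (t.length + 1), hempty, add_zero]
  refine Finset.sum_congr rfl fun k _ => ?_
  rw [sum_vector_succ k fun L => c L * psiWord e L one (0 :: t)]
  simp only [psiWord_cons_apply_cons_zero]

theorem comp_apply_cons_of_ne_zero (c : Series (Fin (ℓ + 1))) {x : Fin (m + 1)} (hx : x ≠ 0)
    (t : List (Fin (m + 1))) : comp c e (x :: t) = 0 :=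
  Finset.sum_eq_zero fun _ _ => Finset.sum_eq_zero fun v _ => by
    rw [psiWord_one_apply_cons_of_ne_zero e _ hx, mul_zero]

theorem comp_sh_apply_of_length_lt (n : ℕ) :
    ∀ (c d : Series (Fin (ℓ + 1))) (η : List (Fin (m + 1))), η.length < n →
      comp (sh c d) e η = sh (comp c e) (comp d e) η := by
  induction n with
  | zero => exact fun _ _ _ h => absurd h (Nat.not_lt_zero _)
  | succ n ih =>
    rintro c d (_ | ⟨x, t⟩) hη
    · simp only [comp_nil, sh]
    rcases eq_or_ne x 0 with rfl | hx
    · have hshift : ∀ c : Series (Fin (ℓ + 1)), (fun t => comp c e (0 :: t)) =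
          ∑ i, sh (Fin.cases one e i) (comp (fun w => c (i :: w)) e) := fun c =>
        funext fun t => by rw [comp_apply_cons_zero, Finset.sum_apply]
      have hind : ∀ i, sh (Fin.cases one e i) (comp (fun w => sh c d (i :: w)) e) t =
          sh (Fin.cases one e i) (sh (comp (fun w => c (i :: w)) e) (comp d e)
            + sh (comp c e) (comp (fun w => d (i :: w)) e)) t := fun i => by
        rw [sh_cons, comp_add]
        exact sh_congr_right fun w hw => by
          simp only [Pi.add_apply, ih _ _ w (by simp at hη; omega)]
      rw [comp_apply_cons_zero, Finset.sum_congr rfl fun i _ => hind i]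
      simp only [sh, hshift, sh_sum_left, sh_sum_right, sh_add_right, Finset.sum_apply,
        Pi.add_apply, Finset.sum_add_distrib, sh_assoc, sh_left_comm _ (comp c e)]
    · simp only [sh, comp_apply_cons_of_ne_zero e _ hx, ← Pi.zero_def, sh_zero_left, sh_zero_right,
        Pi.zero_apply, add_zero]

end Composition

/-- The shuffle product distributes over the composition product from the
left: `(c ⧢ d) ∘ e = (c ∘ e) ⧢ (d ∘ e)`. -/
theorem shuffle_distributes_over_comp (ℓ m : ℕ)
    (c d : Series (Fin (ℓ + 1))) (e : Fin ℓ → Series (Fin (m + 1))) :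
    comp (sh c d) e = sh (comp c e) (comp d e) :=
  funext fun η => comp_sh_apply_of_length_lt e _ c d η η.length.lt_succ_self

end FPS
end

section
/- The composition product is a strong contraction in its right argument: for c ∈ ℝ⟨⟨X'⟩⟩ and d, e ∈ ℝ^ℓ⟨⟨X⟩⟩, κ(c ∘ d, c ∘ e) ≤ σ·κ(d,e), where κ is the ultrametric κ(a,b) = σ^{ord(a−b)} with σ ∈ (0,1). -/
open scoped BigOperators

namespace FPS

variable {X : Type*}

theorem le_ord_iff {c : Series X} {n : ℕ∞} :
    n ≤ ord c ↔ ∀ w : List X, (w.length : ℕ∞) < n → c w = 0 := by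
  refine ⟨fun h w hw => ?_, fun h => le_sInf ?_⟩
  · by_contra hne
    exact (hw.trans_le h).not_ge (sInf_le ⟨w, hne, rfl⟩)
  · rintro _ ⟨w, hw, rfl⟩
    exact le_of_not_gt fun hlt => hw (h w hlt)

theorem ordV_le_ord {n : ℕ} (c : Fin n → Series X) (i : Fin n) : ordV c ≤ ord (c i) :=
  iInf_le _ i

theorem powE_nonneg {σ : ℝ} (h0 : 0 ≤ σ) (n : ℕ∞) : 0 ≤ powE σ n := by
  unfold powE
  split
  · exact le_rfl
  · exact pow_nonneg h0 _

theorem powE_antitone {σ : ℝ} (h0 : 0 ≤ σ) (h1 : σ ≤ 1) : Antitone (powE σ) := by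
  intro a b hab
  induction b using ENat.recTopCoe with
  | top => simpa [powE] using powE_nonneg h0 a
  | coe b =>
    lift a to ℕ using ne_top_of_le_ne_top (ENat.natCast_ne_top b) hab
    simpa [powE] using pow_le_pow_of_le_one h0 h1 (by exact_mod_cast hab)

theorem powE_add_one (σ : ℝ) (n : ℕ∞) : powE σ (n + 1) = σ * powE σ n := by
  induction n using ENat.recTopCoe with
  | top => simp [powE]
  | coe n =>
    simp only [powE, ← Nat.cast_add_one, ENat.natCast_ne_top, if_false, ENat.toNat_natCast]
    rw [pow_succ, mul_comm]

theorem sh_congr : ∀ (w : List X) (f f' g g' : Series X),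
    (∀ u : List X, u.length ≤ w.length → f u = f' u) →
    (∀ u : List X, u.length ≤ w.length → g u = g' u) →
    sh f g w = sh f' g' w
  | [], f, f', g, g', hf, hg => by
      simp only [sh, hf [] le_rfl, hg [] le_rfl]
  | x :: t, f, f', g, g', hf, hg => by
      have hcons : ∀ u : List X, u.length ≤ t.length → (x :: u).length ≤ (x :: t).length :=
        fun u hu => Nat.succ_le_succ hu
      have hlt : ∀ u : List X, u.length ≤ t.length → u.length ≤ (x :: t).length :=
        fun u hu => hu.trans (Nat.le_succ _)
      simp only [sh]
      congr 1
      · exact sh_congr t _ _ _ _ (fun u hu => hf _ (hcons u hu)) (fun u hu => hg u (hlt u hu))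
      · exact sh_congr t _ _ _ _ (fun u hu => hf u (hlt u hu)) (fun u hu => hg _ (hcons u hu))

variable {ℓ m : ℕ} {d e : Fin ℓ → Series (Fin (m + 1))}

/-- Each letter of `v` contributes a leading `x₀`, so `ψ(v)(1)` at a word of length `N`
only sees the coefficients of the `eᵢ` at words of length `< N`. -/
theorem psiWord_one_congr {N : ℕ}
    (hde : ∀ i (u : List (Fin (m + 1))), u.length < N → d i u = e i u)
    (v : List (Fin (ℓ + 1))) {w : List (Fin (m + 1))} (hw : w.length ≤ N) :
    psiWord d v one w = psiWord e v one w := by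
  induction v generalizing w with
  | nil => rfl
  | cons i t ih =>
    cases w with
    | nil => rfl
    | cons y w =>
      have hwN : w.length < N := hw
      simp only [psiWord, leftc]
      split_ifs
      · refine sh_congr w _ _ _ _ (fun u hu => ?_) (fun u hu => ih (by omega))
        cases i using Fin.cases with
        | zero => rfl
        | succ j => exact hde j u (by omega)
      · rfl

theorem comp_congr {c : Series (Fin (ℓ + 1))} {η : List (Fin (m + 1))}
    (hde : ∀ i (u : List (Fin (m + 1))), u.length < η.length → d i u = e i u) :
    comp c d η = comp c e η := by
  unfold comp
  refine Finset.sum_congr rfl fun k _ => Finset.sum_congr rfl fun v _ => ?_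
  rw [psiWord_one_congr hde v.toList le_rfl]

theorem ordV_sub_add_one_le_ord_comp_sub (c : Series (Fin (ℓ + 1))) :
    ordV (d - e) + 1 ≤ ord (comp c d - comp c e) := by
  refine le_ord_iff.mpr fun η hη => sub_eq_zero.mpr (comp_congr fun i u hu => ?_)
  have hηN : (η.length : ℕ∞) ≤ ordV (d - e) :=
    (ENat.lt_add_one_iff' (ENat.natCast_ne_top _)).mp hη
  have hu : (u.length : ℕ∞) < ord ((d - e) i) :=
    (Nat.cast_lt.mpr hu).trans_le (hηN.trans (ordV_le_ord _ i))
  exact sub_eq_zero.mp (le_ord_iff.mp le_rfl u hu)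

/-- The composition product is a strong contraction in its right argument:
`κ(c ∘ d, c ∘ e) ≤ σ · κ(d, e)`. -/
theorem comp_strong_contraction (ℓ m : ℕ) (σ : ℝ) (hσ0 : 0 < σ) (hσ1 : σ < 1)
    (c : Series (Fin (ℓ + 1))) (d e : Fin ℓ → Series (Fin (m + 1))) :
    kappa σ (comp c d) (comp c e) ≤ σ * kappaV σ d e := by
  calc kappa σ (comp c d) (comp c e) ≤ powE σ (ordV (d - e) + 1) :=
        powE_antitone hσ0.le hσ1.le (ordV_sub_add_one_le_ord_comp_sub c)
    _ = σ * kappaV σ d e := powE_add_one σ _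

end FPS
end

section
/- For purely improper c ∈ ℝ^m_{pi}⟨⟨X⟩⟩, the group inverse in the multiplicative dynamic feedback group satisfies the identities c^{∘−1} = c^{⧢−1} ∘̄ δ_{c^{∘−1}} and (c^{∘−1})^{⧢−1} = c ∘̄ δ_{c^{∘−1}}. -/
open scoped BigOperators

namespace FPS

/-!
The equation `e = c^{⧢-1} ∘̄ δ_e` is solvable because the coefficient of `c ∘̄ δ_e` at a word `η`
only depends on `e` at words shorter than `η`; so `dynInv c` satisfies it. The map `· ∘̄ δ_e` is a
shuffle homomorphism fixing `1`, so applying it to `c^{⧢-1} ⧢ c = 1` gives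
`e ⧢ (c ∘̄ δ_e) = 1`, and shuffle inverses are unique.
-/

def leftShift {X : Type*} (x : X) (a : Series X) : Series X := fun w => a (x :: w)

theorem leftShift_add {X : Type*} (x : X) (a b : Series X) :
    leftShift x (a + b) = leftShift x a + leftShift x b := rfl

theorem leftShift_smul {X : Type*} (x : X) (r : ℝ) (a : Series X) :
    leftShift x (r • a) = r • leftShift x a := rfl

-- The iterates of `F` from `0` stabilise word by word.
theorem exists_isFixedPt_of_causal {X ι : Type*} (F : (ι → Series X) → ι → Series X)
    (hF : ∀ (e e' : ι → Series X) (η : List X),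
      (∀ j u, u.length < η.length → e j u = e' j u) → ∀ i, F e i η = F e' i η) :
    ∃ e, Function.IsFixedPt F e := by
  have step : ∀ n i (η : List X), η.length < n → F^[n] 0 i η = F^[n + 1] 0 i η := by
    intro n
    induction n with
    | zero => intro i η h; exact absurd h (Nat.not_lt_zero _)
    | succ n ih =>
      intro i η h
      rw [Function.iterate_succ_apply' F n, Function.iterate_succ_apply' F (n + 1)]
      exact hF _ _ η (fun j u hu => ih j u (by omega)) i
  have stable : ∀ n n' i (η : List X), η.length < n → n ≤ n' → F^[n] 0 i η = F^[n'] 0 i η := by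
    intro n n' i η hη hn
    induction n', hn using Nat.le_induction with
    | base => rfl
    | succ n' hn ih => rw [ih, step n' i η (by omega)]
  refine ⟨fun i η => F^[η.length + 1] 0 i η, funext fun i => funext fun η => ?_⟩
  calc F (fun i η => F^[η.length + 1] 0 i η) i η = F (F^[η.length] 0) i η :=
        hF _ _ η (fun j u hu => stable _ _ j u (by omega) (by omega)) i
    _ = F^[η.length + 1] 0 i η := by rw [Function.iterate_succ_apply']

section Shuffle

variable {X : Type*}

@[simp] theorem sh_nil (a b : Series X) : sh a b [] = a [] * b [] := rfl

theorem sh_cons_s14 (a b : Series X) (x : X) (t : List X) :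
    sh a b (x :: t) = sh (leftShift x a) b t + sh a (leftShift x b) t := rfl

theorem leftShift_sh (x : X) (a b : Series X) :
    leftShift x (sh a b) = sh (leftShift x a) b + sh a (leftShift x b) := rfl

theorem sh_apply_congr {a a' b b' : Series X} {η : List X}
    (ha : ∀ u : List X, u.length ≤ η.length → a u = a' u)
    (hb : ∀ u : List X, u.length ≤ η.length → b u = b' u) : sh a b η = sh a' b' η := by
  induction η generalizing a a' b b' with
  | nil => simp only [sh_nil, ha [] le_rfl, hb [] le_rfl]
  | cons x t ih =>
    rw [sh_cons_s14, sh_cons_s14]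
    congr 1
    · exact ih (fun u hu => ha _ (by simpa using hu)) (fun u hu => hb u (by simp; omega))
    · exact ih (fun u hu => ha u (by simp; omega)) (fun u hu => hb _ (by simpa using hu))

theorem sh_smul_left (r : ℝ) (a b : Series X) : sh (r • a) b = r • sh a b := by
  funext η
  induction η generalizing a b with
  | nil => exact mul_assoc _ _ _
  | cons x t ih =>
    simp only [sh_cons_s14, Pi.smul_apply, smul_eq_mul, leftShift_smul, ih] at *
    ring

def shBilin : Series X →ₗ[ℝ] Series X →ₗ[ℝ] Series X :=
  LinearMap.mk₂ ℝ sh sh_add_left sh_smul_left sh_add_right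
    (fun r a b => by rw [sh_comm, sh_smul_left, sh_comm b])

@[simp] theorem shBilin_apply (a b : Series X) : shBilin a b = sh a b := rfl

theorem leftShift_one (x : X) : leftShift x (one : Series X) = 0 := by
  funext w; simp [leftShift, one]

theorem sh_one_left (b : Series X) : sh one b = b := by
  funext η
  induction η generalizing b with
  | nil => simp [one]
  | cons x t ih =>
    rw [sh_cons_s14, leftShift_one, ih, sh_zero_left]
    simp [leftShift]

theorem sh_one_right (a : Series X) : sh a one = a := by rw [sh_comm, sh_one_left]

theorem sh_apply_eq_zero_of_lt {a b : Series X} {p q : ℕ}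
    (ha : ∀ u : List X, u.length < p → a u = 0) (hb : ∀ u : List X, u.length < q → b u = 0)
    {η : List X} (hη : η.length < p + q) : sh a b η = 0 := by
  induction η generalizing a b p q with
  | nil =>
    rcases Nat.eq_zero_or_pos p with rfl | hp
    · simp [hb [] (by simpa using hη)]
    · simp [ha [] hp]
  | cons x t ih =>
    simp only [List.length_cons] at hη
    rw [sh_cons_s14, ih (a := leftShift x a) (p := p - 1) (fun u hu => ha (x :: u) (by simp; omega))
        hb (by omega),
      ih (b := leftShift x b) (q := q - 1) ha (fun u hu => hb (x :: u) (by simp; omega))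
        (by omega), add_zero]

theorem shpow_apply_eq_zero {a : Series X} (ha : a [] = 0) (k : ℕ) {η : List X}
    (hη : η.length < k) : shpow a k η = 0 := by
  induction k generalizing η with
  | zero => exact absurd hη (Nat.not_lt_zero _)
  | succ k ih =>
    exact sh_apply_eq_zero_of_lt (p := 1)
      (fun u hu => by rwa [List.length_eq_zero_iff.1 (Nat.lt_one_iff.1 hu)]) (fun u hu => ih hu)
      (by omega)

theorem sprime_nil (s : Series X) : sprime s [] = 0 := by simp [sprime]

theorem shInv_apply_eq_sum (s : Series X) {η : List X} {N : ℕ} (hη : η.length ≤ N) :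
    shInv s η = ((s [])⁻¹ • ∑ k ∈ Finset.range (N + 1), shpow (sprime s) k) η := by
  simp only [shInv, Pi.smul_apply, Finset.sum_apply, smul_eq_mul]
  congr 1
  exact Finset.sum_subset (Finset.range_subset_range.mpr (by omega))
    fun k _ hk => shpow_apply_eq_zero (sprime_nil s) k (by simp at hk; omega)

theorem smul_one_sub_sprime {s : Series X} (hs : s [] ≠ 0) : s [] • (one - sprime s) = s := by
  funext w
  rcases w with _ | ⟨x, t⟩
  · simp [one, sprime]
  · simp [one, sprime]
    field_simp

theorem sh_eq_smul_sub_sh_sprime {s : Series X} (hs : s [] ≠ 0) (b : Series X) :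
    sh s b = s [] • (b - sh (sprime s) b) := by
  calc sh s b = shBilin (s [] • (one - sprime s)) b := by rw [smul_one_sub_sprime hs]; rfl
    _ = s [] • (b - sh (sprime s) b) := by
      rw [LinearMap.map_smul₂, LinearMap.map_sub₂, shBilin_apply, shBilin_apply, sh_one_left]

-- `s ⧢ s'^{⧢k}` telescopes, and the partial sums of `shInv s` are exact on short words.
theorem sh_shInv {s : Series X} (hs : s [] ≠ 0) : sh s (shInv s) = one := by
  funext η
  have telescope : ∀ k, sh s (shpow (sprime s) k) =
      s [] • (shpow (sprime s) k - shpow (sprime s) (k + 1)) :=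
    fun k => sh_eq_smul_sub_sh_sprime hs _
  calc sh s (shInv s) η
      = sh s ((s [])⁻¹ • ∑ k ∈ Finset.range (η.length + 1), shpow (sprime s) k) η :=
        sh_apply_congr (fun _ _ => rfl) (fun u hu => shInv_apply_eq_sum s hu)
    _ = (shpow (sprime s) 0 - shpow (sprime s) (η.length + 1)) η := by
        rw [← shBilin_apply, map_smul, map_sum]
        simp only [shBilin_apply, telescope, ← Finset.smul_sum, smul_smul, inv_mul_cancel₀ hs,
          one_smul, Finset.sum_range_sub']
    _ = one η := by
        rw [Pi.sub_apply, shpow_apply_eq_zero (sprime_nil s) _ (Nat.lt_succ_self _), sub_zero]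
        rfl

theorem shInv_eq_of_sh_eq_one {a b : Series X} (h : sh a b = one) : shInv a = b := by
  have ha : a [] ≠ 0 := by
    intro h0
    simpa [h0, one] using congrFun h []
  calc shInv a = sh (shInv a) (sh a b) := by rw [h, sh_one_right]
    _ = sh (sh a (shInv a)) b := by rw [← sh_assoc, sh_comm (shInv a)]
    _ = b := by rw [sh_shInv ha, sh_one_left]

end Shuffle

theorem sum_vector_succ_s14 {α β : Type*} [Fintype α] [AddCommMonoid β] (k : ℕ)
    (f : List.Vector α (k + 1) → β) :
    ∑ v, f v = ∑ a, ∑ v : List.Vector α k, f (a ::ᵥ v) := by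
  let e : α × List.Vector α k ≃ List.Vector α (k + 1) :=
    { toFun := fun p => p.1 ::ᵥ p.2
      invFun := fun v => (v.head, v.tail)
      left_inv := fun p => by simp
      right_inv := fun v => by simp }
  rw [← e.sum_comp, Fintype.sum_prod_type]
  rfl

section Leftc

variable {X : Type*} [DecidableEq X]

@[simp] theorem leftc_nil (x : X) (s : Series X) : leftc x s [] = 0 := rfl

theorem leftc_cons (x y : X) (s : Series X) (t : List X) :
    leftc x s (y :: t) = if y = x then s t else 0 := rfl

end Leftc

section MixedComposition

variable {m : ℕ} (d : Fin m → Series (Fin (m + 1)))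

/-- `φ̄_d(x_i)` without its leading letter: `φ̄_d(x_i)(w) = x_i (letterOp d i w)`. -/
def letterOp (i : Fin (m + 1)) : Series (Fin (m + 1)) →ₗ[ℝ] Series (Fin (m + 1)) :=
  Fin.cases LinearMap.id (fun j => shBilin (d j)) i

@[simp] theorem letterOp_zero (b : Series (Fin (m + 1))) : letterOp d 0 b = b := rfl

@[simp] theorem letterOp_succ (j : Fin m) (b : Series (Fin (m + 1))) :
    letterOp d j.succ b = sh (d j) b := rfl

theorem letterOp_sh_left (i : Fin (m + 1)) (a b : Series (Fin (m + 1))) :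
    letterOp d i (sh a b) = sh (letterOp d i a) b := by
  cases i using Fin.cases <;> simp [sh_assoc]

theorem letterOp_sh_right (i : Fin (m + 1)) (a b : Series (Fin (m + 1))) :
    letterOp d i (sh a b) = sh a (letterOp d i b) := by
  cases i using Fin.cases <;> simp [sh_left_comm]

variable {d} in
theorem letterOp_apply_congr {d' : Fin m → Series (Fin (m + 1))} (i : Fin (m + 1))
    {b b' : Series (Fin (m + 1))} {t : List (Fin (m + 1))}
    (hd : ∀ j u, u.length ≤ t.length → d j u = d' j u)
    (hb : ∀ u, u.length ≤ t.length → b u = b' u) : letterOp d i b t = letterOp d' i b' t := by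
  cases i using Fin.cases with
  | zero => exact hb t le_rfl
  | succ j => exact sh_apply_congr (hd j) hb

theorem phiWord_cons (i : Fin (m + 1)) (l : List (Fin (m + 1))) (w : Series (Fin (m + 1))) :
    phiWord d (i :: l) w = leftc i (letterOp d i (phiWord d l w)) := by
  cases i using Fin.cases <;> rfl

theorem phiWord_apply_eq_zero (w : Series (Fin (m + 1))) {l η : List (Fin (m + 1))}
    (h : η.length < l.length) : phiWord d l w η = 0 := by
  induction l generalizing η with
  | nil => simp at h
  | cons i l ih =>
    rcases η with _ | ⟨y, t⟩
    · rw [phiWord_cons, leftc_nil]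
    · rw [phiWord_cons, leftc_cons]
      split_ifs
      · simp only [List.length_cons] at h
        cases i using Fin.cases with
        | zero => exact ih (by omega)
        | succ j =>
          exact sh_apply_eq_zero_of_lt (p := 0) (fun _ hu => absurd hu (Nat.not_lt_zero _))
            (fun u hu => ih hu) (by omega)
      · rfl

variable {d} in
theorem phiWord_apply_congr {d' : Fin m → Series (Fin (m + 1))} (l : List (Fin (m + 1)))
    (w : Series (Fin (m + 1))) {η : List (Fin (m + 1))}
    (h : ∀ j u, u.length < η.length → d j u = d' j u) : phiWord d l w η = phiWord d' l w η := by
  induction l generalizing η with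
  | nil => rfl
  | cons i l ih =>
    rcases η with _ | ⟨y, t⟩
    · rw [phiWord_cons, phiWord_cons, leftc_nil, leftc_nil]
    · rw [phiWord_cons, phiWord_cons, leftc_cons, leftc_cons]
      split_ifs
      · exact letterOp_apply_congr i (fun j u hu => h j u (by simp; omega))
          (fun u hu => ih fun j v hv => h j v (by simp; omega))
      · rfl

theorem mix_apply_eq_sum (c : Series (Fin (m + 1))) {η : List (Fin (m + 1))} {N : ℕ}
    (hη : η.length ≤ N) :
    mix c d η = (∑ k ∈ Finset.range (N + 1), ∑ v : List.Vector (Fin (m + 1)) k,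
      c v.toList • phiWord d v.toList one) η := by
  simp only [mix, Finset.sum_apply, Pi.smul_apply, smul_eq_mul]
  refine Finset.sum_subset (Finset.range_subset_range.mpr (by omega))
    fun k _ hk => Finset.sum_eq_zero fun v _ => ?_
  rw [phiWord_apply_eq_zero d one (by simp at hk; rw [List.Vector.toList_length]; omega), mul_zero]

@[simp] theorem mix_nil (c : Series (Fin (m + 1))) : mix c d [] = c [] := by
  simp [mix, one, phiWord]

theorem leftShift_mix (c : Series (Fin (m + 1))) (y : Fin (m + 1)) :
    leftShift y (mix c d) = letterOp d y (mix (leftShift y c) d) := by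
  funext t
  have only_first_letter_y : ∀ k (v : List.Vector (Fin (m + 1)) k) (i : Fin (m + 1)),
      c (i :: v.toList) * phiWord d (i :: v.toList) one (y :: t) =
        if y = i then c (y :: v.toList) * letterOp d y (phiWord d v.toList one) t else 0 := by
    intro k v i
    rw [phiWord_cons, leftc_cons]
    split_ifs with h
    · rw [h]
    · rw [mul_zero]
  calc leftShift y (mix c d) t
      = ∑ k ∈ Finset.range (t.length + 1), ∑ v : List.Vector (Fin (m + 1)) k,
          c (y :: v.toList) * letterOp d y (phiWord d v.toList one) t := by
        rw [leftShift, mix, List.length_cons, Finset.sum_range_succ']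
        simp only [sum_vector_succ_s14, List.Vector.toList_cons, only_first_letter_y]
        have empty_word : ∑ v : List.Vector (Fin (m + 1)) 0,
            c v.toList * phiWord d v.toList one (y :: t) = 0 := by
          simp [phiWord, one]
        rw [empty_word, add_zero]
        refine Finset.sum_congr rfl fun k _ => ?_
        rw [Finset.sum_comm]
        simp only [Finset.sum_ite_eq, Finset.mem_univ, if_true]
    _ = letterOp d y (mix (leftShift y c) d) t := by
        rw [letterOp_apply_congr y (fun _ _ _ => rfl) (fun u hu => mix_apply_eq_sum d _ hu)]
        rw [map_sum (letterOp d y), Finset.sum_apply]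
        refine Finset.sum_congr rfl fun k _ => ?_
        rw [map_sum (letterOp d y), Finset.sum_apply]
        refine Finset.sum_congr rfl fun v _ => ?_
        rw [map_smul]
        rfl

variable {d} in
theorem mix_apply_congr_right {d' : Fin m → Series (Fin (m + 1))} (c : Series (Fin (m + 1)))
    {η : List (Fin (m + 1))} (h : ∀ j u, u.length < η.length → d j u = d' j u) :
    mix c d η = mix c d' η := by
  simp only [mix]
  refine Finset.sum_congr rfl fun k _ => Finset.sum_congr rfl fun v _ => ?_
  rw [phiWord_apply_congr _ _ h]

theorem mix_add_left (a b : Series (Fin (m + 1))) : mix (a + b) d = mix a d + mix b d := by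
  funext η
  simp only [mix, Pi.add_apply, add_mul, Finset.sum_add_distrib]

theorem mix_zero_left : mix 0 d = 0 := by
  funext η
  simp [mix]

theorem mix_one_left : mix one d = one := by
  funext w
  rcases w with _ | ⟨y, t⟩
  · simp [one]
  · change leftShift y (mix one d) t = one (y :: t)
    rw [leftShift_mix, leftShift_one, mix_zero_left, map_zero]
    rfl

-- Both sides satisfy the same left-shift recursion.
theorem mix_sh (a b : Series (Fin (m + 1))) : mix (sh a b) d = sh (mix a d) (mix b d) := by
  suffices h : ∀ n (a b : Series (Fin (m + 1))) (η : List (Fin (m + 1))), η.length ≤ n →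
      mix (sh a b) d η = sh (mix a d) (mix b d) η from
    funext fun η => h _ a b η le_rfl
  intro n
  induction n with
  | zero =>
    intro a b η hη
    rw [List.length_eq_zero_iff.1 (Nat.le_zero.1 hη)]
    simp
  | succ n ih =>
    intro a b η hη
    rcases η with _ | ⟨y, t⟩
    · simp
    have ht : t.length ≤ n := by simpa using hη
    change leftShift y (mix (sh a b) d) t = leftShift y (sh (mix a d) (mix b d)) t
    calc leftShift y (mix (sh a b) d) t
        = letterOp d y (mix (sh (leftShift y a) b) d + mix (sh a (leftShift y b)) d) t := by
          rw [leftShift_mix, leftShift_sh, mix_add_left]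
      _ = letterOp d y (sh (mix (leftShift y a) d) (mix b d) +
            sh (mix a d) (mix (leftShift y b) d)) t :=
          letterOp_apply_congr y (fun _ _ _ => rfl) fun u hu => by
            rw [Pi.add_apply, Pi.add_apply, ih _ _ u (hu.trans ht), ih _ _ u (hu.trans ht)]
      _ = leftShift y (sh (mix a d) (mix b d)) t := by
          rw [leftShift_sh, leftShift_mix, leftShift_mix, map_add, letterOp_sh_left,
            letterOp_sh_right]

end MixedComposition

theorem dynInv_eq_mix_shInv {m : ℕ} (d : Fin m → Series (Fin (m + 1))) :
    dynInv d = fun i => mix (shInv (d i)) (dynInv d) := by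
  obtain ⟨e, he⟩ := exists_isFixedPt_of_causal (fun e i => mix (shInv (d i)) e)
    fun _ _ _ h i => mix_apply_congr_right _ h
  have hex : ∃ e : Fin m → Series (Fin (m + 1)), e = fun i => mix (shInv (d i)) e := ⟨e, he.symm⟩
  rw [show dynInv d = hex.choose from dif_pos hex]
  exact hex.choose_spec

/-- For purely improper `c`, the group inverse `c^{∘-1}` satisfies
`c^{∘-1} = c^{⧢-1} ∘̄ δ_{c^{∘-1}}` and `(c^{∘-1})^{⧢-1} = c ∘̄ δ_{c^{∘-1}}`. -/
theorem dynInv_identities (m : ℕ) (c : Fin m → Series (Fin (m + 1)))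
    (hc : ∀ i, c i [] ≠ 0) :
    dynInv c = (fun i => mix (shInv (c i)) (dynInv c)) ∧
    (fun i => shInv (dynInv c i)) = fun i => mix (c i) (dynInv c) := by
  have hfix := dynInv_eq_mix_shInv c
  refine ⟨hfix, funext fun i => shInv_eq_of_sh_eq_one ?_⟩
  have hfix_i : dynInv c i = mix (shInv (c i)) (dynInv c) := congrFun hfix i
  rw [hfix_i, ← mix_sh, sh_comm, sh_shInv (hc i), mix_one_left]

end FPS
end
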